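/- arXiv:1505.05418 — 2 statements merged into one kernel-verified Lean document; each statement's English description precedes it below -/
import Mathlib

section
/- Under the same assumptions, the dual trajectory satisfies ‖v‖_{L^∞(0,T;H)} ≤ ‖v₀‖ + √(2T)‖∇ψ(x₀)‖ + √(2/c₀)·T·L_ψ·((φ+ψ)(x₀) − inf_H (φ+ψ))^{1/2}. -/
open MeasureTheory Set Filter
open scoped Topology

variable {H : Type*} [NormedAddCommGroup H] [InnerProductSpace ℝ H] [CompleteSpace H]

/-- `v` belongs to the convex subdifferential of `φ` at `x`. -/
def IsSubdiff (φ : H → EReal) (x v : H) : Prop :=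
  ∀ y : H, φ x + ((inner ℝ v (y - x) : ℝ) : EReal) ≤ φ y

/-- `φ` is proper, convex and lower semicontinuous. -/
def ProperConvexLSC (φ : H → EReal) : Prop :=
  (∀ z, φ z ≠ ⊥) ∧ (∃ z, φ z ≠ ⊤) ∧ LowerSemicontinuous φ ∧
  (∀ z w : H, ∀ a b : ℝ, 0 ≤ a → 0 ≤ b → a + b = 1 →
      φ (a • z + b • w) ≤ (a : EReal) * φ z + (b : EReal) * φ w)

/-- Standing assumptions: `φ` proper convex lsc, `ψ` convex with gradient `ψ'`,
and `φ + ψ` bounded below on `H`. -/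
def Standing (φ : H → EReal) (ψ : H → ℝ) (ψ' : H → H) : Prop :=
  ProperConvexLSC φ ∧
  ConvexOn ℝ Set.univ ψ ∧ (∀ z, HasGradientAt ψ (ψ' z) z) ∧
  (∃ m : ℝ, ∀ z, (m : EReal) ≤ φ z + (ψ z : EReal))

/-- The energy gap `(φ+ψ)(x₀) - inf_H (φ+ψ)` as a real number. -/
noncomputable def Egap (φ : H → EReal) (ψ : H → ℝ) (x₀ : H) : ℝ :=
  ((φ x₀ + (ψ x₀ : EReal)) - sInf (Set.range fun z => φ z + (ψ z : EReal))).toReal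

/-- `(x, v)` is a strong (absolutely continuous) solution on `[0, T]` of
`v ∈ ∂φ(x)`, `λ ẋ + v̇ + v + ∇ψ(x) = 0` a.e., with a.e. derivatives `x'`, `v'`. -/
structure StrongSol (φ : H → EReal) (ψ' : H → H) (lam : ℝ → ℝ) (T : ℝ)
    (x v x' v' : ℝ → H) : Prop where
  subdiff : ∀ t ∈ Set.Icc (0:ℝ) T, IsSubdiff φ (x t) (v t)
  xint : IntegrableOn x' (Set.Icc 0 T)
  vint : IntegrableOn v' (Set.Icc 0 T)
  xrep : ∀ t ∈ Set.Icc (0:ℝ) T, x t = x 0 + ∫ s in (0:ℝ)..t, x' s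
  vrep : ∀ t ∈ Set.Icc (0:ℝ) T, v t = v 0 + ∫ s in (0:ℝ)..t, v' s
  xderiv : ∀ᵐ t ∂(volume.restrict (Set.Ioo 0 T)), HasDerivAt x (x' t) t
  vderiv : ∀ᵐ t ∂(volume.restrict (Set.Ioo 0 T)), HasDerivAt v (v' t) t
  eqn : ∀ᵐ t ∂(volume.restrict (Set.Ioo 0 T)),
      lam t • x' t + v' t + v t + ψ' (x t) = 0

/-!
Monotonicity of `∂φ` gives `⟪v̇, ẋ⟫ ≥ 0` a.e. Testing the equation against `ẋ` and using the
chain-rule inequality for the convex energy `φ + ψ` (obtained by adding up subgradient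
inequalities over short subintervals of `[0, t]`) yields
`c₀ ∫₀ᵗ ‖ẋ‖² ≤ (φ + ψ)(x₀) - inf (φ + ψ)`. By Cauchy–Schwarz `‖x(s) - x₀‖ ≤ √(t ∫₀ᵗ ‖ẋ‖²)`, so
`‖∇ψ(x)‖ ≤ K := ‖∇ψ(x₀)‖ + L_ψ √(t ∫₀ᵗ ‖ẋ‖²)` on `[0, t]`. Testing the equation against `v̇` then
gives `d/dt ‖v‖² ≤ -2‖v̇‖² + 2K‖v̇‖ ≤ K²/2`, hence `‖v(t)‖ ≤ ‖v₀‖ + √(t/2) K`.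
-/

open scoped RealInnerProductSpace

section IntervalEstimates

theorem MeasureTheory.IntegrableOn.intervalIntegrable_of_subset {E : Type*} [NormedAddCommGroup E]
    {f : ℝ → E} {s : Set ℝ} {u w : ℝ} (hf : IntegrableOn f s) (huw : u ≤ w) (hs : Icc u w ⊆ s) :
    IntervalIntegrable f volume u w :=
  (hf.mono_set (by rwa [uIcc_of_le huw])).intervalIntegrable

variable {E : Type*} [NormedAddCommGroup E] [InnerProductSpace ℝ E]

theorem sub_le_intervalIntegral_of_forall_sub_le {F h : ℝ → ℝ} {a b δ : ℝ} (hab : a ≤ b)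
    (hδ : 0 < δ) (hh : IntegrableOn h (Icc a b))
    (hF : ∀ u w, a ≤ u → u ≤ w → w ≤ b → w - u < δ → F w - F u ≤ ∫ s in u..w, h s) :
    F b - F a ≤ ∫ s in a..b, h s := by
  have hii : ∀ u w, a ≤ u → u ≤ w → w ≤ b → IntervalIntegrable h volume u w :=
    fun u w hu huw hw => hh.intervalIntegrable_of_subset huw (Icc_subset_Icc hu hw)
  have key : ∀ n : ℕ, ∀ s ∈ Icc a b, s ≤ a + n * (δ / 2) → F s - F a ≤ ∫ r in a..s, h r := by
    intro n
    induction n with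
    | zero =>
      intro s hs hsn
      obtain rfl : s = a := le_antisymm (by simpa using hsn) hs.1
      simp
    | succ n ih =>
      intro s hs hsn
      by_cases hs' : s ≤ a + n * (δ / 2)
      · exact ih s hs hs'
      set u := a + n * (δ / 2) with hu_def
      have hau : a ≤ u := le_add_of_nonneg_right (by positivity)
      have hus : u ≤ s := (not_le.1 hs').le
      have hu := ih u ⟨hau, hus.trans hs.2⟩ le_rfl
      have hus' := hF u s hau hus hs.2 (by push_cast at hsn; linarith)
      rw [← intervalIntegral.integral_add_adjacent_intervals
        (hii a u le_rfl hau (hus.trans hs.2)) (hii u s hau hus hs.2)]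
      linarith
  obtain ⟨n, hn⟩ := exists_nat_gt ((b - a) / (δ / 2))
  exact key n b ⟨hab, le_rfl⟩ (by rw [div_lt_iff₀ (by positivity)] at hn; linarith)

theorem ContinuousOn.integrableOn_inner {f g : ℝ → E} {a b : ℝ} (hf : ContinuousOn f (Icc a b))
    (hg : IntegrableOn g (Icc a b)) : IntegrableOn (fun s => ⟪f s, g s⟫) (Icc a b) := by
  obtain ⟨C, hC⟩ := isCompact_Icc.exists_bound_of_continuousOn hf
  refine Integrable.mono' (hg.norm.const_mul C)
    ((hf.aestronglyMeasurable measurableSet_Icc).inner hg.1) ?_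
  filter_upwards [ae_restrict_mem measurableSet_Icc] with s hs
  calc ‖⟪f s, g s⟫‖ ≤ ‖f s‖ * ‖g s‖ := norm_inner_le_norm _ _
    _ ≤ C * ‖g s‖ := by gcongr; exact hC s hs

variable [CompleteSpace E]

theorem inner_intervalIntegral_le {f g : ℝ → E} {u w ε : ℝ} (huw : u ≤ w)
    (hfg : IntegrableOn (fun s => ⟪f s, g s⟫) (Icc u w)) (hg : IntegrableOn g (Icc u w))
    (hf : ∀ s ∈ Icc u w, ‖f w - f s‖ ≤ ε) :
    ⟪f w, ∫ s in u..w, g s⟫ ≤ ∫ s in u..w, (⟪f s, g s⟫ + ε * ‖g s‖) := by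
  have hg' := hg.mono_set Ioc_subset_Icc_self
  rw [intervalIntegral.integral_of_le huw, intervalIntegral.integral_of_le huw,
    ← integral_inner hg']
  refine setIntegral_mono_on (hg'.const_inner _)
    ((hfg.add (hg.norm.const_mul ε)).mono_set Ioc_subset_Icc_self) measurableSet_Ioc
    fun s hs => ?_
  calc ⟪f w, g s⟫ = ⟪f s, g s⟫ + ⟪f w - f s, g s⟫ := by rw [inner_sub_left]; ring
    _ ≤ ⟪f s, g s⟫ + ε * ‖g s‖ := by
      gcongr
      exact (real_inner_le_norm _ _).trans
        (mul_le_mul_of_nonneg_right (hf s (Ioc_subset_Icc_self hs)) (norm_nonneg _))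

theorem sub_le_intervalIntegral_inner_of_forall_sub_le {F : ℝ → ℝ} {f g : ℝ → E} {a b : ℝ}
    (hab : a ≤ b) (hf : ContinuousOn f (Icc a b)) (hg : IntegrableOn g (Icc a b))
    (hF : ∀ u w, a ≤ u → u ≤ w → w ≤ b → F w - F u ≤ ⟪f w, ∫ s in u..w, g s⟫) :
    F b - F a ≤ ∫ s in a..b, ⟪f s, g s⟫ := by
  have hfg := hf.integrableOn_inner hg
  set M := ∫ s in a..b, ‖g s‖
  have hM : 0 ≤ M := intervalIntegral.integral_nonneg hab fun _ _ => norm_nonneg _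
  refine le_of_forall_pos_le_add fun ε hε => ?_
  obtain ⟨δ, hδ, hfδ⟩ := Metric.uniformContinuousOn_iff.1
    (isCompact_Icc.uniformContinuousOn_of_continuous hf) (ε / (M + 1)) (by positivity)
  calc F b - F a ≤ ∫ s in a..b, (⟪f s, g s⟫ + ε / (M + 1) * ‖g s‖) := by
        refine sub_le_intervalIntegral_of_forall_sub_le hab hδ (hfg.add (hg.norm.const_mul _))
          fun u w hu huw hw hwu => (hF u w hu huw hw).trans ?_
        refine inner_intervalIntegral_le huw (hfg.mono_set (Icc_subset_Icc hu hw))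
          (hg.mono_set (Icc_subset_Icc hu hw)) fun s hs => ?_
        rw [← dist_eq_norm]
        refine (hfδ w ⟨hu.trans huw, hw⟩ s (Icc_subset_Icc hu hw hs) ?_).le
        rw [Real.dist_eq, abs_of_nonneg (by linarith [hs.2])]
        linarith [hs.1]
    _ = (∫ s in a..b, ⟪f s, g s⟫) + ε / (M + 1) * M := by
        rw [intervalIntegral.integral_add (hfg.intervalIntegrable_of_subset hab subset_rfl)
          ((IntegrableOn.intervalIntegrable_of_subset hg.norm hab subset_rfl).const_mul _),
          intervalIntegral.integral_const_mul]
    _ ≤ (∫ s in a..b, ⟪f s, g s⟫) + ε := by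
        gcongr
        rw [div_mul_eq_mul_div, div_le_iff₀ (by positivity)]
        nlinarith

end IntervalEstimates

-- `EReal.toReal` sends `⊤` to `0`, so this is only meaningful on the domain of `φ`.
noncomputable def energy {α : Type*} (φ : α → EReal) (ψ : α → ℝ) (z : α) : ℝ :=
  (φ z).toReal + ψ z

theorem energy_sub_le_Egap {α : Type*} {φ : α → EReal} {ψ : α → ℝ} {x₀ z : α}
    (hbdd : ∃ m : ℝ, ∀ z, (m : EReal) ≤ φ z + (ψ z : EReal))
    (h₀ : φ x₀ ≠ ⊥) (h₀' : φ x₀ ≠ ⊤) (hz : φ z ≠ ⊥) (hz' : φ z ≠ ⊤) :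
    energy φ ψ x₀ - energy φ ψ z ≤ Egap φ ψ x₀ := by
  obtain ⟨m, hm⟩ := hbdd
  have hx₀ : φ x₀ + (ψ x₀ : EReal) = (energy φ ψ x₀ : EReal) := by
    rw [energy, EReal.coe_add, EReal.coe_toReal h₀' h₀]
  have hz₀ : φ z + (ψ z : EReal) = (energy φ ψ z : EReal) := by
    rw [energy, EReal.coe_add, EReal.coe_toReal hz' hz]
  rw [Egap, hx₀]
  set I := sInf (Set.range fun z => φ z + (ψ z : EReal))
  have hIz : I ≤ (energy φ ψ z : EReal) := hz₀ ▸ sInf_le ⟨z, rfl⟩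
  have hmI : (m : EReal) ≤ I := le_sInf (by rintro _ ⟨y, rfl⟩; exact hm y)
  obtain ⟨i, hi⟩ : ∃ i : ℝ, I = i := ⟨I.toReal, (EReal.coe_toReal
    (ne_top_of_le_ne_top (EReal.coe_ne_top _) hIz)
    (ne_bot_of_le_ne_bot (EReal.coe_ne_bot _) hmI)).symm⟩
  rw [hi, EReal.coe_le_coe_iff] at hIz
  rw [hi, ← EReal.coe_sub, EReal.toReal_coe]
  linarith

section

variable {E : Type*} [NormedAddCommGroup E] [InnerProductSpace ℝ E]

theorem IsSubdiff.ne_top {φ : E → EReal} {p w z : E} (h : IsSubdiff φ p w) (hz : φ z ≠ ⊤) :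
    φ p ≠ ⊤ := fun hp => hz (top_le_iff.1 (by simpa [hp] using h z))

theorem IsSubdiff.toReal_sub_le {φ : E → EReal} {p q u : E} (hbot : ∀ z, φ z ≠ ⊥)
    (hq : IsSubdiff φ q u) (hp : φ p ≠ ⊤) :
    (φ q).toReal - (φ p).toReal ≤ ⟪u, q - p⟫ := by
  have h := hq p
  rw [← EReal.coe_toReal (hq.ne_top hp) (hbot q), ← EReal.coe_toReal hp (hbot p),
    ← EReal.coe_add, EReal.coe_le_coe_iff, ← neg_sub q p, inner_neg_right] at h
  linarith

theorem IsSubdiff.inner_sub_nonneg {φ : E → EReal} {p w q u : E} (hbot : ∀ z, φ z ≠ ⊥)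
    (hp : IsSubdiff φ p w) (hq : IsSubdiff φ q u) (hfin : φ p ≠ ⊤) :
    0 ≤ ⟪u - w, q - p⟫ := by
  have h₁ := hq.toReal_sub_le hbot hfin
  have h₂ := hp.toReal_sub_le hbot (hq.ne_top hfin)
  rw [← neg_sub q p, inner_neg_right] at h₂
  rw [inner_sub_left]
  linarith

theorem HasDerivAt.inner_nonneg_of_inner_sub_nonneg {x v : ℝ → E} {x' v' : E} {s : ℝ}
    (hx : HasDerivAt x x' s) (hv : HasDerivAt v v' s)
    (hmono : ∀ᶠ h in 𝓝[>] (0 : ℝ), 0 ≤ ⟪v (s + h) - v s, x (s + h) - x s⟫) :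
    0 ≤ ⟪v', x'⟫ := by
  refine ge_of_tendsto (hv.tendsto_slope_zero_right.inner hx.tendsto_slope_zero_right) ?_
  filter_upwards [hmono] with h hh
  rw [real_inner_smul_left, real_inner_smul_right, ← mul_assoc]
  exact mul_nonneg (mul_self_nonneg _) hh

end

theorem ConvexOn.sub_le_inner_of_hasGradientAt {E : Type*} [NormedAddCommGroup E]
    [InnerProductSpace ℝ E] [CompleteSpace E] {ψ : E → ℝ} {g a b : E}
    (hψ : ConvexOn ℝ univ ψ) (hg : HasGradientAt ψ g b) :
    ψ b - ψ a ≤ ⟪g, b - a⟫ := by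
  let ℓ : ℝ →ᵃ[ℝ] E := AffineMap.lineMap a b
  have hconv : ConvexOn ℝ univ (ψ ∘ ℓ) := by simpa using hψ.comp_affineMap ℓ
  have hderiv : HasDerivAt (ψ ∘ ℓ) ⟪g, b - a⟫ 1 := by
    have hℓ : HasDerivAt ℓ (b - a) 1 := AffineMap.hasDerivAt_lineMap
    have hg' : HasFDerivAt ψ (InnerProductSpace.toDual ℝ E g) (ℓ 1) := by
      simpa [ℓ] using hg.hasFDerivAt
    simpa using hg'.comp_hasDerivAt (1 : ℝ) hℓ
  simpa [slope_def_field, ℓ] using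
    hconv.slope_le_of_hasDerivAt (mem_univ 0) (mem_univ 1) one_pos hderiv

theorem integral_le_sqrt_measureReal_mul_integral_sq {α : Type*} [MeasurableSpace α]
    {μ : Measure α} [IsFiniteMeasure μ] {g : α → ℝ} (hg₀ : 0 ≤ᵐ[μ] g) (hg : MemLp g 2 μ) :
    ∫ a, g a ∂μ ≤ √(μ.real univ * ∫ a, g a ^ 2 ∂μ) := by
  have h := integral_mul_le_Lp_mul_Lq_of_nonneg Real.HolderConjugate.two_two
    (Eventually.of_forall fun _ => zero_le_one) hg₀ (memLp_const (1 : ℝ)) (by simpa using hg)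
  simp only [one_mul, Real.rpow_two, one_pow, mul_one, integral_const, smul_eq_mul] at h
  rwa [Real.sqrt_mul measureReal_nonneg, Real.sqrt_eq_rpow, Real.sqrt_eq_rpow]

section Primitive

variable {F : Type*} [NormedAddCommGroup F] [NormedSpace ℝ F] {u u' : ℝ → F} {T : ℝ}

theorem continuousOn_of_eq_add_intervalIntegral (hu' : IntegrableOn u' (Icc 0 T))
    (hrep : ∀ t ∈ Icc (0 : ℝ) T, u t = u 0 + ∫ s in (0 : ℝ)..t, u' s) :
    ContinuousOn u (Icc 0 T) := by
  refine ((continuousOn_const (c := u 0)).add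
    (intervalIntegral.continuousOn_primitive hu')).congr fun t ht => ?_
  rw [hrep t ht, intervalIntegral.integral_of_le ht.1]
  rfl

theorem sub_eq_intervalIntegral_of_eq_add (hu' : IntegrableOn u' (Icc 0 T))
    (hrep : ∀ t ∈ Icc (0 : ℝ) T, u t = u 0 + ∫ s in (0 : ℝ)..t, u' s) {a b : ℝ}
    (ha : a ∈ Icc 0 T) (hb : b ∈ Icc 0 T) :
    u b - u a = ∫ s in a..b, u' s := by
  have hi : ∀ c ∈ Icc (0 : ℝ) T, IntervalIntegrable u' volume 0 c := fun c hc =>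
    hu'.intervalIntegrable_of_subset hc.1 (Icc_subset_Icc le_rfl hc.2)
  rw [hrep b hb, hrep a ha, ← intervalIntegral.integral_interval_sub_left (hi b hb) (hi a ha)]
  abel

theorem norm_sub_le_sqrt_mul_integral_norm_sq (hu' : IntegrableOn u' (Icc 0 T))
    (hrep : ∀ t ∈ Icc (0 : ℝ) T, u t = u 0 + ∫ s in (0 : ℝ)..t, u' s)
    (hsq : IntegrableOn (fun s => ‖u' s‖ ^ 2) (Icc 0 T)) {t : ℝ} (ht : t ∈ Icc 0 T) :
    ‖u t - u 0‖ ≤ √(T * ∫ s in Icc 0 T, ‖u' s‖ ^ 2) := by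
  have hmem : MemLp (fun s => ‖u' s‖) 2 (volume.restrict (Icc 0 T)) :=
    (memLp_two_iff_integrable_sq hu'.1.norm).2 hsq
  calc ‖u t - u 0‖ = ‖∫ s in Ioc 0 t, u' s‖ := by
        rw [sub_eq_intervalIntegral_of_eq_add hu' hrep ⟨le_rfl, ht.1.trans ht.2⟩ ht,
          intervalIntegral.integral_of_le ht.1]
    _ ≤ ∫ s in Ioc 0 t, ‖u' s‖ := norm_integral_le_integral_norm _
    _ ≤ ∫ s in Icc 0 T, ‖u' s‖ :=
        setIntegral_mono_set hu'.norm (Eventually.of_forall fun _ => norm_nonneg _)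
          (Ioc_subset_Icc_self.trans (Icc_subset_Icc le_rfl ht.2)).eventuallyLE
    _ ≤ √(T * ∫ s in Icc 0 T, ‖u' s‖ ^ 2) := by
        simpa [Real.volume_real_Icc_of_le (ht.1.trans ht.2)] using
          integral_le_sqrt_measureReal_mul_integral_sq
            (Eventually.of_forall fun _ => norm_nonneg _) hmem

end Primitive

namespace StrongSol

variable {E : Type*} [NormedAddCommGroup E] [InnerProductSpace ℝ E]
  {φ : E → EReal} {ψ' : E → E} {lam : ℝ → ℝ} {T : ℝ} {x v x' v' : ℝ → E}

theorem mono (sol : StrongSol φ ψ' lam T x v x' v') {t : ℝ} (htT : t ≤ T) :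
    StrongSol φ ψ' lam t x v x' v' where
  subdiff s hs := sol.subdiff s ⟨hs.1, hs.2.trans htT⟩
  xint := sol.xint.mono_set (Icc_subset_Icc le_rfl htT)
  vint := sol.vint.mono_set (Icc_subset_Icc le_rfl htT)
  xrep s hs := sol.xrep s ⟨hs.1, hs.2.trans htT⟩
  vrep s hs := sol.vrep s ⟨hs.1, hs.2.trans htT⟩
  xderiv := ae_restrict_of_ae_restrict_of_subset (Ioo_subset_Ioo_right htT) sol.xderiv
  vderiv := ae_restrict_of_ae_restrict_of_subset (Ioo_subset_Ioo_right htT) sol.vderiv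
  eqn := ae_restrict_of_ae_restrict_of_subset (Ioo_subset_Ioo_right htT) sol.eqn

theorem inner_deriv_nonneg (sol : StrongSol φ ψ' lam T x v x' v') (hbot : ∀ z, φ z ≠ ⊥)
    (hdom : ∃ z, φ z ≠ ⊤) :
    ∀ᵐ s ∂(volume.restrict (Icc 0 T)), 0 ≤ ⟪v' s, x' s⟫ := by
  obtain ⟨z, hz⟩ := hdom
  rw [← Measure.restrict_congr_set Ioo_ae_eq_Icc]
  filter_upwards [sol.xderiv, sol.vderiv, ae_restrict_mem measurableSet_Ioo] with s hx hv hs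
  refine hx.inner_nonneg_of_inner_sub_nonneg hv ?_
  filter_upwards [Ioo_mem_nhdsGT (sub_pos.2 hs.2)] with h hh
  have hsx := sol.subdiff s (Ioo_subset_Icc_self hs)
  exact hsx.inner_sub_nonneg hbot
    (sol.subdiff (s + h) ⟨by linarith [hs.1, hh.1], by linarith [hh.2]⟩) (hsx.ne_top hz)

theorem eventually_mul_norm_sq_le (sol : StrongSol φ ψ' lam T x v x' v') {c₀ : ℝ}
    (hlam : ∀ t ∈ Icc (0 : ℝ) T, c₀ ≤ lam t) (hbot : ∀ z, φ z ≠ ⊥) (hdom : ∃ z, φ z ≠ ⊤) :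
    ∀ᵐ s ∂(volume.restrict (Icc 0 T)), c₀ * ‖x' s‖ ^ 2 ≤ -⟪v s + ψ' (x s), x' s⟫ := by
  have heqn := sol.eqn
  rw [Measure.restrict_congr_set Ioo_ae_eq_Icc] at heqn
  filter_upwards [heqn, sol.inner_deriv_nonneg hbot hdom, ae_restrict_mem measurableSet_Icc]
    with s hs hmono hsT
  have hv : v s + ψ' (x s) = -(lam s • x' s + v' s) := by
    rw [eq_neg_iff_add_eq_zero, ← hs]; abel
  rw [hv, inner_neg_left, neg_neg, inner_add_left, real_inner_smul_left,
    real_inner_self_eq_norm_sq]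
  nlinarith [hlam s hsT, sq_nonneg ‖x' s‖]

theorem integrableOn_inner_deriv (sol : StrongSol φ ψ' lam T x v x' v') (hψ' : Continuous ψ') :
    IntegrableOn (fun s => ⟪v s + ψ' (x s), x' s⟫) (Icc 0 T) :=
  ((continuousOn_of_eq_add_intervalIntegral sol.vint sol.vrep).add
    (hψ'.comp_continuousOn (continuousOn_of_eq_add_intervalIntegral sol.xint sol.xrep))
    ).integrableOn_inner sol.xint

theorem integrableOn_norm_sq_deriv (sol : StrongSol φ ψ' lam T x v x' v') {c₀ : ℝ}
    (hc₀ : 0 < c₀) (hlam : ∀ t ∈ Icc (0 : ℝ) T, c₀ ≤ lam t) (hbot : ∀ z, φ z ≠ ⊥)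
    (hdom : ∃ z, φ z ≠ ⊤) (hψ' : Continuous ψ') :
    IntegrableOn (fun s => ‖x' s‖ ^ 2) (Icc 0 T) := by
  refine Integrable.mono' ((sol.integrableOn_inner_deriv hψ').neg.const_mul c₀⁻¹)
    (sol.xint.1.norm.pow 2) ?_
  filter_upwards [sol.eventually_mul_norm_sq_le hlam hbot hdom] with s hs
  rw [Real.norm_of_nonneg (sq_nonneg _), Pi.neg_apply, inv_mul_eq_div, le_div_iff₀ hc₀]
  linarith

theorem eventually_inner_two_smul_deriv_le (sol : StrongSol φ ψ' lam T x v x' v')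
    (hlam : ∀ t ∈ Icc (0 : ℝ) T, 0 ≤ lam t) (hbot : ∀ z, φ z ≠ ⊥) (hdom : ∃ z, φ z ≠ ⊤)
    {K : ℝ} (hK : ∀ t ∈ Icc (0 : ℝ) T, ‖ψ' (x t)‖ ≤ K) :
    ∀ᵐ s ∂(volume.restrict (Icc 0 T)), ⟪(2 : ℝ) • v s, v' s⟫ ≤ K ^ 2 / 2 := by
  have heqn := sol.eqn
  rw [Measure.restrict_congr_set Ioo_ae_eq_Icc] at heqn
  filter_upwards [heqn, sol.inner_deriv_nonneg hbot hdom, ae_restrict_mem measurableSet_Icc]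
    with s hs hmono hsT
  have hv : v s = -(lam s • x' s + v' s + ψ' (x s)) := by
    rw [eq_neg_iff_add_eq_zero, ← hs]; abel
  have hψ : -(K * ‖v' s‖) ≤ ⟪ψ' (x s), v' s⟫ :=
    (neg_le_neg (mul_le_mul_of_nonneg_right (hK s hsT) (norm_nonneg _))).trans
      (neg_le_of_abs_le (abs_real_inner_le_norm _ _))
  rw [real_inner_comm] at hmono
  rw [real_inner_smul_left, hv, inner_neg_left, inner_add_left, inner_add_left,
    real_inner_smul_left, real_inner_self_eq_norm_sq]
  nlinarith [mul_nonneg (hlam s hsT) hmono, sq_nonneg (‖v' s‖ - K / 2)]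

variable [CompleteSpace E] {ψ : E → ℝ}

theorem energy_sub_le (sol : StrongSol φ ψ' lam T x v x' v') (hT : 0 ≤ T)
    (hbot : ∀ z, φ z ≠ ⊥) (hdom : ∃ z, φ z ≠ ⊤) (hψ : ConvexOn ℝ univ ψ)
    (hgrad : ∀ z, HasGradientAt ψ (ψ' z) z) (hψ' : Continuous ψ') :
    energy φ ψ (x T) - energy φ ψ (x 0) ≤ ∫ s in (0 : ℝ)..T, ⟪v s + ψ' (x s), x' s⟫ := by
  obtain ⟨z, hz⟩ := hdom
  have hxc := continuousOn_of_eq_add_intervalIntegral sol.xint sol.xrep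
  have hvc := continuousOn_of_eq_add_intervalIntegral sol.vint sol.vrep
  refine sub_le_intervalIntegral_inner_of_forall_sub_le (F := fun s => energy φ ψ (x s))
    (f := fun s => v s + ψ' (x s)) hT (hvc.add (hψ'.comp_continuousOn hxc)) sol.xint
    fun a b ha hab hb => ?_
  have haT : a ∈ Icc 0 T := ⟨ha, hab.trans hb⟩
  have hbT : b ∈ Icc 0 T := ⟨ha.trans hab, hb⟩
  rw [← sub_eq_intervalIntegral_of_eq_add sol.xint sol.xrep haT hbT, inner_add_left]
  have hφ := (sol.subdiff b hbT).toReal_sub_le hbot ((sol.subdiff a haT).ne_top hz)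
  have hψab := hψ.sub_le_inner_of_hasGradientAt (a := x a) (hgrad (x b))
  simp only [energy]
  linarith

theorem mul_integral_norm_sq_le (sol : StrongSol φ ψ' lam T x v x' v') (hT : 0 ≤ T) {c₀ : ℝ}
    (hc₀ : 0 < c₀) (hlam : ∀ t ∈ Icc (0 : ℝ) T, c₀ ≤ lam t) (hbot : ∀ z, φ z ≠ ⊥)
    (hdom : ∃ z, φ z ≠ ⊤) (hψ : ConvexOn ℝ univ ψ) (hgrad : ∀ z, HasGradientAt ψ (ψ' z) z)
    (hψ' : Continuous ψ') :
    c₀ * ∫ s in Icc 0 T, ‖x' s‖ ^ 2 ≤ energy φ ψ (x 0) - energy φ ψ (x T) := by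
  have h := integral_mono_ae
    ((sol.integrableOn_norm_sq_deriv hc₀ hlam hbot hdom hψ').const_mul c₀)
    (sol.integrableOn_inner_deriv hψ').neg (sol.eventually_mul_norm_sq_le hlam hbot hdom)
  simp only [Pi.neg_apply] at h
  rw [integral_const_mul, integral_neg,
    integral_Icc_eq_integral_Ioc (f := fun s => ⟪v s + ψ' (x s), x' s⟫),
    ← intervalIntegral.integral_of_le hT] at h
  linarith [sol.energy_sub_le hT hbot hdom hψ hgrad hψ']

theorem norm_sq_sub_le_integral (sol : StrongSol φ ψ' lam T x v x' v') (hT : 0 ≤ T) :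
    ‖v T‖ ^ 2 - ‖v 0‖ ^ 2 ≤ ∫ s in (0 : ℝ)..T, ⟪(2 : ℝ) • v s, v' s⟫ := by
  refine sub_le_intervalIntegral_inner_of_forall_sub_le (F := fun s => ‖v s‖ ^ 2)
    (f := fun s => (2 : ℝ) • v s) hT
    ((continuousOn_of_eq_add_intervalIntegral sol.vint sol.vrep).const_smul 2) sol.vint
    fun a b ha hab hb => ?_
  rw [← sub_eq_intervalIntegral_of_eq_add sol.vint sol.vrep ⟨ha, hab.trans hb⟩
    ⟨ha.trans hab, hb⟩, real_inner_smul_left, inner_sub_right, real_inner_self_eq_norm_sq]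
  nlinarith [norm_sub_sq_real (v b) (v a), sq_nonneg ‖v b - v a‖]

theorem norm_le_add_sqrt_mul (sol : StrongSol φ ψ' lam T x v x' v') (hT : 0 ≤ T)
    (hlam : ∀ t ∈ Icc (0 : ℝ) T, 0 ≤ lam t) (hbot : ∀ z, φ z ≠ ⊥) (hdom : ∃ z, φ z ≠ ⊤)
    {K : ℝ} (hK : ∀ t ∈ Icc (0 : ℝ) T, ‖ψ' (x t)‖ ≤ K) :
    ‖v T‖ ≤ ‖v 0‖ + √(T / 2) * K := by
  have hint : ∫ s in (0 : ℝ)..T, ⟪(2 : ℝ) • v s, v' s⟫ ≤ T * (K ^ 2 / 2) := by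
    rw [intervalIntegral.integral_of_le hT, ← integral_Icc_eq_integral_Ioc]
    refine (integral_mono_ae
      (((continuousOn_of_eq_add_intervalIntegral sol.vint sol.vrep).const_smul (2 : ℝ)
        ).integrableOn_inner sol.vint) (integrable_const _)
      (sol.eventually_inner_two_smul_deriv_le hlam hbot hdom hK)).trans_eq ?_
    simp [Real.volume_real_Icc_of_le hT]
  have hK₀ : 0 ≤ K := (norm_nonneg _).trans (hK 0 ⟨le_rfl, hT⟩)
  have hsqrt : √(T / 2) ^ 2 = T / 2 := Real.sq_sqrt (by positivity)
  have hcross := mul_nonneg (mul_nonneg (norm_nonneg (v 0)) (Real.sqrt_nonneg (T / 2))) hK₀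
  have hsq : ‖v T‖ ^ 2 ≤ (‖v 0‖ + √(T / 2) * K) ^ 2 := by
    calc ‖v T‖ ^ 2 ≤ ‖v 0‖ ^ 2 + T * (K ^ 2 / 2) := by
          linarith [sol.norm_sq_sub_le_integral hT]
      _ ≤ (‖v 0‖ + √(T / 2) * K) ^ 2 := by rw [add_sq, mul_pow, hsqrt]; nlinarith
  exact le_of_pow_le_pow_left₀ two_ne_zero (by positivity) hsq

end StrongSol

theorem sqrt_half_mul_add_le {t T c S e a L : ℝ} (ht : 0 ≤ t) (htT : t ≤ T) (hc : 0 < c)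
    (hS : 0 ≤ S) (hcS : c * S ≤ e) (ha : 0 ≤ a) (hL : 0 ≤ L) :
    √(t / 2) * (a + L * √(t * S)) ≤ √(2 * T) * a + √(2 / c) * T * L * √e := by
  have hT : 0 ≤ T := ht.trans htT
  have hSe : S ≤ e / c := by rw [le_div_iff₀ hc]; linarith
  have he : 0 ≤ e := (mul_nonneg hc.le hS).trans hcS
  have h : √(t / 2) * √(t * S) ≤ √(2 / c) * T * √e := by
    rw [← Real.sqrt_mul (by positivity), ← Real.sqrt_sq hT, ← Real.sqrt_mul (by positivity),
      ← Real.sqrt_mul (by positivity)]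
    refine Real.sqrt_le_sqrt ?_
    have htt : t * t ≤ T ^ 2 := by nlinarith
    have hTe : 0 ≤ T ^ 2 * (e / c) := by positivity
    calc t / 2 * (t * S) = t * t * S / 2 := by ring
      _ ≤ T ^ 2 * (e / c) / 2 := by gcongr
      _ ≤ 2 / c * T ^ 2 * e := by
          rw [show 2 / c * T ^ 2 * e = 4 * (T ^ 2 * (e / c) / 2) by ring]
          linarith
  calc √(t / 2) * (a + L * √(t * S)) = √(t / 2) * a + L * (√(t / 2) * √(t * S)) := by ring
    _ ≤ √(2 * T) * a + L * (√(2 / c) * T * √e) := by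
        gcongr
        linarith
    _ = √(2 * T) * a + √(2 / c) * T * L * √e := by ring

theorem stmt4_general (φ : H → EReal) (ψ : H → ℝ) (ψ' : H → H) (hst : Standing φ ψ ψ')
    (lam : ℝ → ℝ) (T c₀ : ℝ) (hc₀ : 0 < c₀)
    (hlam : ∀ t ∈ Set.Icc (0:ℝ) T, c₀ ≤ lam t)
    (x v x' v' : ℝ → H) (x₀ v₀ : H) (hx0 : x 0 = x₀) (hv0 : v 0 = v₀)
    (sol : StrongSol φ ψ' lam T x v x' v')
    (Lψ : ℝ) (hLψ : 0 ≤ Lψ)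
    (hlip : ∀ a b : H, ‖ψ' a - ψ' b‖ ≤ Lψ * ‖a - b‖) :
    ∀ t ∈ Set.Icc (0:ℝ) T,
      ‖v t‖ ≤ ‖v₀‖ + Real.sqrt (2 * T) * ‖ψ' x₀‖ +
        Real.sqrt (2 / c₀) * T * Lψ * Real.sqrt (Egap φ ψ x₀) := by
  obtain ⟨⟨hbot, hdom, -, -⟩, hψ, hgrad, hbdd⟩ := hst
  subst hx0 hv0
  have hψ' : Continuous ψ' :=
    (LipschitzWith.of_dist_le' fun a b => by simpa only [dist_eq_norm] using hlip a b).continuous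
  rintro t ⟨ht, htT⟩
  have solt := sol.mono htT
  have hlamt : ∀ s ∈ Icc (0 : ℝ) t, c₀ ≤ lam s := fun s hs => hlam s ⟨hs.1, hs.2.trans htT⟩
  set S := ∫ s in Icc 0 t, ‖x' s‖ ^ 2
  have hsq := solt.integrableOn_norm_sq_deriv hc₀ hlamt hbot hdom hψ'
  have hfin : ∀ s ∈ Icc (0 : ℝ) t, φ (x s) ≠ ⊤ := fun s hs =>
    (solt.subdiff s hs).ne_top hdom.choose_spec
  have hS : c₀ * S ≤ Egap φ ψ (x 0) :=
    (solt.mul_integral_norm_sq_le ht hc₀ hlamt hbot hdom hψ hgrad hψ').trans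
      (energy_sub_le_Egap hbdd (hbot _) (hfin 0 ⟨le_rfl, ht⟩) (hbot _) (hfin t ⟨ht, le_rfl⟩))
  have hK : ∀ s ∈ Icc (0 : ℝ) t, ‖ψ' (x s)‖ ≤ ‖ψ' (x 0)‖ + Lψ * √(t * S) := fun s hs =>
    calc ‖ψ' (x s)‖ ≤ ‖ψ' (x 0)‖ + ‖ψ' (x s) - ψ' (x 0)‖ := norm_le_insert' _ _
      _ ≤ ‖ψ' (x 0)‖ + Lψ * √(t * S) := by
        grw [hlip, norm_sub_le_sqrt_mul_integral_norm_sq solt.xint solt.xrep hsq hs]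
  have hv := solt.norm_le_add_sqrt_mul ht (fun s hs => hc₀.le.trans (hlamt s hs)) hbot hdom hK
  linarith [sqrt_half_mul_add_le ht htT hc₀ (setIntegral_nonneg measurableSet_Icc
    fun s _ => sq_nonneg ‖x' s‖) hS (norm_nonneg (ψ' (x 0))) hLψ]

theorem stmt4 (φ : H → EReal) (ψ : H → ℝ) (ψ' : H → H) (hst : Standing φ ψ ψ')
    (lam : ℝ → ℝ) (T c₀ : ℝ) (hT : 0 < T) (hc₀ : 0 < c₀)
    (hlam : ∀ t ∈ Set.Icc (0:ℝ) T, c₀ ≤ lam t)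
    (x v x' v' : ℝ → H) (x₀ v₀ : H) (hx0 : x 0 = x₀) (hv0 : v 0 = v₀)
    (hv₀ : IsSubdiff φ x₀ v₀)
    (sol : StrongSol φ ψ' lam T x v x' v')
    (Lψ : ℝ) (hLψ : 0 ≤ Lψ)
    (hlip : ∀ a b : H, ‖ψ' a - ψ' b‖ ≤ Lψ * ‖a - b‖) :
    ∀ t ∈ Set.Icc (0:ℝ) T,
      ‖v t‖ ≤ ‖v₀‖ + Real.sqrt (2 * T) * ‖ψ' x₀‖ +
        Real.sqrt (2 / c₀) * T * Lψ * Real.sqrt (Egap φ ψ x₀) :=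
  stmt4_general φ ψ ψ' hst lam T c₀ hc₀ hlam x v x' v' x₀ v₀ hx0 hv0 sol Lψ hLψ hlip
end

section
/- (Stability theorem) Let λ, η : [0,T] → [c₀,∞) be absolutely continuous with c₀ > 0, and let (x,v), (y,w) : [0,T] → H×H be strong solutions of λẋ + v̇ + v + ∇ψ(x) = 0, v ∈ ∂φ(x), x(0)=x₀, v(0)=v₀ and ηẏ + ẇ + w + ∇ψ(y) = 0, w ∈ ∂φ(y), y(0)=y₀, w(0)=w₀, respectively. Set θ(t) = √(c₀²‖x(t)−y(t)‖² + ‖v(t)−w(t)‖²). Then ‖θ‖_{L^∞([0,T])} ≤ [ ((λ(0)+η(0))/2)‖x₀−y₀‖ + ‖v₀−w₀‖ + (C/2)‖λ−η‖_{L¹([0,T])} ] · exp( ‖λ̇+η̇‖_{L¹([0,T])}/(2c₀) + T(1 + L_ψ/c₀) ), where C is any upper bound for ‖ẋ + ẏ‖_{L^∞(0,T;H)}. -/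
open MeasureTheory Set Filter
open scoped Topology

variable {H : Type*} [NormedAddCommGroup H] [InnerProductSpace ℝ H] [CompleteSpace H]

/-!
With `γ = (λ + η) / 2 ≥ c₀`, monotonicity of `∂φ` gives `⟪x - y, v - w⟫ ≥ 0`, hence
`θ ≤ G := ‖γ (x - y) + (v - w)‖`. Subtracting the two equations,
`d/dt [γ (x - y) + (v - w)] = γ̇ (x - y) - (v - w) - (∇ψ(x) - ∇ψ(y)) + ((η - λ) / 2) (ẋ + ẏ)`,
whose norm is at most `(|γ̇| / c₀ + 1 + L_ψ / c₀) G + (C / 2) |λ - η|`. Gronwall's inequality for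
absolutely continuous functions then bounds `G`, and with it `θ`.
-/

open scoped NNReal

theorem MeasureTheory.IntegrableOn.intervalIntegrable_of_mem_Icc {E : Type*}
    [NormedAddCommGroup E] {g : ℝ → E} {a b t : ℝ} (hg : IntegrableOn g (Icc a b))
    (ht : t ∈ Icc a b) : IntervalIntegrable g volume a t :=
  (intervalIntegrable_iff_integrableOn_Icc_of_le ht.1).mpr
    (hg.mono_set (Icc_subset_Icc_right ht.2))

theorem integral_le_integral_of_mem_Icc_of_nonneg {k : ℝ → ℝ} {a b t : ℝ}
    (hk : IntegrableOn k (Icc a b)) (hk₀ : ∀ s ∈ Icc a b, 0 ≤ k s) (ht : t ∈ Icc a b) :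
    ∫ s in a..t, k s ≤ ∫ s in a..b, k s :=
  intervalIntegral.integral_mono_interval le_rfl ht.1 ht.2
    ((ae_restrict_iff' measurableSet_Ioc).mpr
      (.of_forall fun s hs => hk₀ s (Ioc_subset_Icc_self hs)))
    (hk.intervalIntegrable_of_mem_Icc (right_mem_Icc.mpr (ht.1.trans ht.2)))

namespace AbsolutelyContinuousOnInterval

variable {a b : ℝ}

theorem congr {X : Type*} [PseudoMetricSpace X] {f g : ℝ → X}
    (hf : AbsolutelyContinuousOnInterval f a b) (hfg : EqOn f g (uIcc a b)) :
    AbsolutelyContinuousOnInterval g a b := by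
  refine Tendsto.congr' ?_ hf
  filter_upwards [mem_inf_of_right (mem_principal_self _)] with E hE
  exact Finset.sum_congr rfl fun i hi => by rw [hfg (hE.1 i hi).1, hfg (hE.1 i hi).2]

theorem _root_.LipschitzOnWith.comp_absolutelyContinuousOnInterval {X Y : Type*}
    [PseudoMetricSpace X] [PseudoMetricSpace Y] {g : X → Y} {f : ℝ → X} {K : ℝ≥0} {s : Set X}
    (hg : LipschitzOnWith K g s) (hf : AbsolutelyContinuousOnInterval f a b)
    (hfs : MapsTo f (uIcc a b) s) : AbsolutelyContinuousOnInterval (g ∘ f) a b := by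
  have hK : Tendsto (fun E : ℕ × (ℕ → ℝ × ℝ) =>
      (K : ℝ) * ∑ i ∈ Finset.range E.1, dist (f (E.2 i).1) (f (E.2 i).2))
      (totalLengthFilter ⊓ 𝓟 (disjWithin a b)) (𝓝 0) := by
    simpa using Tendsto.const_mul (K : ℝ) hf
  refine squeeze_zero' (Eventually.of_forall fun E => Finset.sum_nonneg fun i _ => dist_nonneg)
    ?_ hK
  filter_upwards [mem_inf_of_right (mem_principal_self _)] with E hE
  rw [Finset.mul_sum]
  exact Finset.sum_le_sum fun i hi => hg.dist_le_mul _ (hfs (hE.1 i hi).1) _ (hfs (hE.1 i hi).2)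

theorem _root_.ContDiff.comp_absolutelyContinuousOnInterval {g f : ℝ → ℝ} (hg : ContDiff ℝ 1 g)
    (hf : AbsolutelyContinuousOnInterval f a b) : AbsolutelyContinuousOnInterval (g ∘ f) a b := by
  obtain ⟨M, hM⟩ := hf.exists_bound
  obtain ⟨K, hK⟩ :=
    hg.contDiffOn.exists_lipschitzOnWith one_ne_zero (convex_Icc (-M) M) isCompact_Icc
  exact hK.comp_absolutelyContinuousOnInterval hf fun x hx => abs_le.mp (hM x hx)

theorem integral_eq_sub_of_ae_hasDerivAt {f f' : ℝ → ℝ} (hab : a ≤ b)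
    (hf : AbsolutelyContinuousOnInterval f a b)
    (hf' : ∀ᵐ x, x ∈ Ioo a b → HasDerivAt f (f' x) x) :
    ∫ x in a..b, f' x = f b - f a := by
  refine (intervalIntegral.integral_congr_ae ?_).trans hf.integral_deriv_eq_sub
  have hb : ∀ᵐ x : ℝ, x ≠ b := by simp [ae_iff, measure_singleton]
  filter_upwards [hf', hb] with x hx hxb hxab
  rw [uIoc_of_le hab] at hxab
  exact (hx ⟨hxab.1, lt_of_le_of_ne hxab.2 hxb⟩).deriv.symm

end AbsolutelyContinuousOnInterval

section Primitive

variable {E : Type*} [NormedAddCommGroup E] [NormedSpace ℝ E] {T : ℝ}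

/-- Absolute continuity on `[0, T]` with a.e. derivative `f'`, in the integral form used by
`StrongSol`. -/
structure IsPrimitiveOn (f f' : ℝ → E) (T : ℝ) : Prop where
  integrableOn : IntegrableOn f' (Icc 0 T)
  eq_add_integral : ∀ t ∈ Icc 0 T, f t = f 0 + ∫ s in 0..t, f' s

variable {f f' g g' : ℝ → E}

namespace IsPrimitiveOn

theorem intervalIntegrable (hf : IsPrimitiveOn f f' T) {t : ℝ} (ht : t ∈ Icc 0 T) :
    IntervalIntegrable f' volume 0 t :=
  hf.integrableOn.intervalIntegrable_of_mem_Icc ht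

theorem mono (hf : IsPrimitiveOn f f' T) {t : ℝ} (ht : t ≤ T) : IsPrimitiveOn f f' t :=
  ⟨hf.integrableOn.mono_set (Icc_subset_Icc_right ht),
    fun s hs => hf.eq_add_integral s ⟨hs.1, hs.2.trans ht⟩⟩

theorem add (hf : IsPrimitiveOn f f' T) (hg : IsPrimitiveOn g g' T) :
    IsPrimitiveOn (f + g) (f' + g') T := by
  refine ⟨hf.integrableOn.add hg.integrableOn, fun t ht => ?_⟩
  simp only [Pi.add_apply, hf.eq_add_integral t ht, hg.eq_add_integral t ht,
    intervalIntegral.integral_add (hf.intervalIntegrable ht) (hg.intervalIntegrable ht)]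
  abel

theorem sub (hf : IsPrimitiveOn f f' T) (hg : IsPrimitiveOn g g' T) :
    IsPrimitiveOn (f - g) (f' - g') T := by
  refine ⟨hf.integrableOn.sub hg.integrableOn, fun t ht => ?_⟩
  simp only [Pi.sub_apply, hf.eq_add_integral t ht, hg.eq_add_integral t ht,
    intervalIntegral.integral_sub (hf.intervalIntegrable ht) (hg.intervalIntegrable ht)]
  abel

theorem div_const {f f' : ℝ → ℝ} (hf : IsPrimitiveOn f f' T) (c : ℝ) :
    IsPrimitiveOn (fun t => f t / c) (fun t => f' t / c) T := by
  refine ⟨hf.integrableOn.div_const c, fun t ht => ?_⟩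
  rw [hf.eq_add_integral t ht, intervalIntegral.integral_div, add_div]

theorem continuousOn (hf : IsPrimitiveOn f f' T) : ContinuousOn f (Icc 0 T) := by
  rcases le_or_gt 0 T with hT | hT
  · have hF := intervalIntegral.continuousOn_primitive_interval (μ := volume) (a := 0)
      (f := f') (b := T) (by rw [uIcc_of_le hT]; exact hf.integrableOn)
    rw [uIcc_of_le hT] at hF
    exact (continuousOn_const.add hF).congr hf.eq_add_integral
  · simp [Icc_eq_empty_of_lt hT]

theorem ae_hasDerivAt [CompleteSpace E] (hf : IsPrimitiveOn f f' T) :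
    ∀ᵐ t, t ∈ Ioo 0 T → HasDerivAt f (f' t) t := by
  rcases le_or_gt 0 T with hT | hT
  · filter_upwards [(hf.intervalIntegrable ⟨hT, le_rfl⟩).ae_hasDerivAt_integral] with t hF ht
    have hrep : (fun s => f 0 + ∫ s in 0..s, f' s) =ᶠ[𝓝 t] f :=
      eventually_of_mem (Icc_mem_nhds ht.1 ht.2) fun s hs => (hf.eq_add_integral s hs).symm
    have htT : t ∈ uIcc 0 T := by rw [uIcc_of_le hT]; exact Ioo_subset_Icc_self ht
    exact ((hF htT 0 left_mem_uIcc).const_add _).congr_of_eventuallyEq hrep.symm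
  · exact Eventually.of_forall fun t ht => absurd (ht.1.trans ht.2) (lt_asymm hT)

theorem absolutelyContinuousOnInterval {f f' : ℝ → ℝ} (hf : IsPrimitiveOn f f' T)
    (hT : 0 ≤ T) : AbsolutelyContinuousOnInterval f 0 T := by
  have hF := (hf.intervalIntegrable ⟨hT, le_rfl⟩).absolutelyContinuousOnInterval_intervalIntegral
    left_mem_uIcc
  refine ((LipschitzWith.const (f 0)).lipschitzOnWith.absolutelyContinuousOnInterval.add
    hF).congr fun t ht => ?_
  rw [uIcc_of_le hT] at ht
  exact (hf.eq_add_integral t ht).symm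

theorem clm_comp {F : Type*} [NormedAddCommGroup F] [NormedSpace ℝ F] [CompleteSpace E]
    [CompleteSpace F] (hf : IsPrimitiveOn f f' T) (L : E →L[ℝ] F) :
    IsPrimitiveOn (fun t => L (f t)) (fun t => L (f' t)) T := by
  refine ⟨L.integrable_comp hf.integrableOn, fun t ht => ?_⟩
  rw [hf.eq_add_integral t ht, map_add, L.intervalIntegral_comp_comm (hf.intervalIntegrable ht)]

theorem mul {p p' q q' : ℝ → ℝ} (hp : IsPrimitiveOn p p' T) (hq : IsPrimitiveOn q q' T) :
    IsPrimitiveOn (fun t => p t * q t) (fun t => p' t * q t + p t * q' t) T := by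
  refine ⟨(hp.integrableOn.mul_continuousOn hq.continuousOn isCompact_Icc).add
    (hq.integrableOn.continuousOn_mul hp.continuousOn isCompact_Icc), fun t ht => ?_⟩
  have hpq := ((hp.mono ht.2).absolutelyContinuousOnInterval ht.1).mul
    ((hq.mono ht.2).absolutelyContinuousOnInterval ht.1)
  rw [hpq.integral_eq_sub_of_ae_hasDerivAt ht.1]
  · exact (add_sub_cancel _ _).symm
  filter_upwards [(hp.mono ht.2).ae_hasDerivAt, (hq.mono ht.2).ae_hasDerivAt] with s hps hqs hs
  exact (hps hs).mul (hqs hs)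

theorem smul [CompleteSpace E] {p p' : ℝ → ℝ} (hp : IsPrimitiveOn p p' T)
    (hq : IsPrimitiveOn g g' T) :
    IsPrimitiveOn (fun t => p t • g t) (fun t => p' t • g t + p t • g' t) T := by
  have hint : IntegrableOn (fun t => p' t • g t + p t • g' t) (Icc 0 T) :=
    (hp.integrableOn.smul_continuousOn hq.continuousOn isCompact_Icc).add
      (hq.integrableOn.continuousOn_smul hp.continuousOn isCompact_Icc)
  refine ⟨hint, fun t ht => (SeparatingDual.eq_iff_forall_dual_eq (R := ℝ)).mpr fun L => ?_⟩
  have hpL := (hp.mul (hq.clm_comp L)).eq_add_integral t ht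
  simpa [← L.intervalIntegral_comp_comm (hint.intervalIntegrable_of_mem_Icc ht)] using hpL

theorem norm_le (hf : IsPrimitiveOn f f' T) {t : ℝ} (ht : t ∈ Icc 0 T) :
    ‖f t‖ ≤ ‖f 0‖ + ∫ s in 0..t, ‖f' s‖ := by
  rw [hf.eq_add_integral t ht]
  grw [norm_add_le, intervalIntegral.norm_integral_le_integral_norm ht.1]

end IsPrimitiveOn

theorem le_mul_exp_integral_of_le_add_integral {g a : ℝ → ℝ} {c : ℝ}
    (hg : ContinuousOn g (Icc 0 T)) (ha : IntegrableOn a (Icc 0 T))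
    (ha₀ : ∀ s ∈ Icc 0 T, 0 ≤ a s) (h : ∀ t ∈ Icc 0 T, g t ≤ c + ∫ s in 0..t, a s * g s)
    {t : ℝ} (ht : t ∈ Icc 0 T) : g t ≤ c * Real.exp (∫ s in 0..t, a s) := by
  set Φ : ℝ → ℝ := fun r => c + ∫ s in 0..r, a s * g s
  set A : ℝ → ℝ := fun r => ∫ s in 0..r, a s
  have hΦ : IsPrimitiveOn Φ (fun s => a s * g s) t :=
    ⟨(ha.mul_continuousOn hg isCompact_Icc).mono_set (Icc_subset_Icc_right ht.2),
      fun r _ => by simp [Φ]⟩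
  have hA : IsPrimitiveOn A a t :=
    ⟨ha.mono_set (Icc_subset_Icc_right ht.2), fun r _ => by simp [A]⟩
  have hW : AbsolutelyContinuousOnInterval (fun r => Real.exp (-A r)) 0 t :=
    (show ContDiff ℝ 1 fun x => Real.exp (-x) by fun_prop).comp_absolutelyContinuousOnInterval
      (hA.absolutelyContinuousOnInterval ht.1)
  -- `(Φ e^{-A})' = a e^{-A} (g - Φ) ≤ 0`, so `Φ e^{-A}` does not exceed its initial value `c`.
  have hFTC := ((hΦ.absolutelyContinuousOnInterval ht.1).mul hW).integral_eq_sub_of_ae_hasDerivAt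
    (f' := fun s => a s * Real.exp (-A s) * (g s - Φ s)) ht.1 (by
      filter_upwards [hΦ.ae_hasDerivAt, hA.ae_hasDerivAt] with s hΦs hAs hs
      exact ((hΦs hs).mul (hAs hs).neg.exp).congr_deriv (by simp only [Pi.neg_apply]; ring))
  have hnonpos : ∫ s in 0..t, a s * Real.exp (-A s) * (g s - Φ s) ≤ 0 := by
    rw [intervalIntegral.integral_of_le ht.1]
    refine setIntegral_nonpos measurableSet_Ioc fun s hs => ?_
    have hsT : s ∈ Icc 0 T := ⟨hs.1.le, hs.2.trans ht.2⟩
    exact mul_nonpos_of_nonneg_of_nonpos (mul_nonneg (ha₀ s hsT) (Real.exp_pos _).le)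
      (sub_nonpos.mpr (h s hsT))
  have hΦW : Φ t * Real.exp (-A t) ≤ c := by
    simp only [Pi.mul_apply, Φ, A, intervalIntegral.integral_same, add_zero, neg_zero,
      Real.exp_zero, mul_one] at hFTC
    linarith
  calc g t ≤ Φ t := h t ht
    _ = Φ t * Real.exp (-A t) * Real.exp (A t) := by
      rw [mul_assoc, ← Real.exp_add, neg_add_cancel, Real.exp_zero, mul_one]
    _ ≤ c * Real.exp (A t) := by gcongr

theorem IsPrimitiveOn.norm_le_add_integral_mul {a b : ℝ → ℝ} (hf : IsPrimitiveOn f f' T)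
    (ha : IntegrableOn a (Icc 0 T)) (hb : IntegrableOn b (Icc 0 T))
    (hb₀ : ∀ s ∈ Icc 0 T, 0 ≤ b s)
    (hf' : ∀ᵐ s ∂volume.restrict (Ioo 0 T), ‖f' s‖ ≤ a s * ‖f s‖ + b s)
    {t : ℝ} (ht : t ∈ Icc 0 T) :
    ‖f t‖ ≤ (‖f 0‖ + ∫ s in 0..T, b s) + ∫ s in 0..t, a s * ‖f s‖ := by
  have haf := ha.mul_continuousOn hf.continuousOn.norm isCompact_Icc
  have hf't : ∀ᵐ s ∂volume.restrict (Icc 0 t), ‖f' s‖ ≤ a s * ‖f s‖ + b s :=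
    ae_restrict_of_ae_restrict_of_subset (Icc_subset_Icc_right ht.2)
      (by rwa [← Measure.restrict_congr_set Ioo_ae_eq_Icc])
  calc ‖f t‖ ≤ ‖f 0‖ + ∫ s in 0..t, ‖f' s‖ := hf.norm_le ht
    _ ≤ ‖f 0‖ + ∫ s in 0..t, (a s * ‖f s‖ + b s) := by
      gcongr
      exact intervalIntegral.integral_mono_ae_restrict ht.1
        (hf.intervalIntegrable ht).norm
        ((haf.add hb).intervalIntegrable_of_mem_Icc ht) hf't
    _ = ‖f 0‖ + (∫ s in 0..t, b s) + ∫ s in 0..t, a s * ‖f s‖ := by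
      rw [intervalIntegral.integral_add (haf.intervalIntegrable_of_mem_Icc ht)
        (hb.intervalIntegrable_of_mem_Icc ht)]
      ring
    _ ≤ _ := by linarith [integral_le_integral_of_mem_Icc_of_nonneg hb hb₀ ht]

theorem IsPrimitiveOn.norm_le_mul_exp {a b : ℝ → ℝ} (hf : IsPrimitiveOn f f' T)
    (ha : IntegrableOn a (Icc 0 T)) (ha₀ : ∀ s ∈ Icc 0 T, 0 ≤ a s)
    (hb : IntegrableOn b (Icc 0 T)) (hb₀ : ∀ s ∈ Icc 0 T, 0 ≤ b s)
    (hf' : ∀ᵐ s ∂volume.restrict (Ioo 0 T), ‖f' s‖ ≤ a s * ‖f s‖ + b s)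
    {t : ℝ} (ht : t ∈ Icc 0 T) :
    ‖f t‖ ≤ (‖f 0‖ + ∫ s in 0..T, b s) * Real.exp (∫ s in 0..T, a s) := by
  calc ‖f t‖ ≤ (‖f 0‖ + ∫ s in 0..T, b s) * Real.exp (∫ s in 0..t, a s) :=
        le_mul_exp_integral_of_le_add_integral hf.continuousOn.norm ha ha₀
          (fun r hr => hf.norm_le_add_integral_mul ha hb hb₀ hf' hr) ht
    _ ≤ _ := by
      have hc : 0 ≤ ‖f 0‖ + ∫ s in 0..T, b s :=
        add_nonneg (norm_nonneg _) (intervalIntegral.integral_nonneg (ht.1.trans ht.2) hb₀)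
      gcongr
      exact integral_le_integral_of_mem_Icc_of_nonneg ha ha₀ ht

end Primitive

section InnerProduct

variable {E : Type*} [NormedAddCommGroup E] [InnerProductSpace ℝ E]

theorem IsSubdiff.ne_top_s9 {φ : E → EReal} {x v : E} (hv : IsSubdiff φ x v)
    (hφ : ∃ z, φ z ≠ ⊤) : φ x ≠ ⊤ := by
  obtain ⟨z, hz⟩ := hφ
  intro hx
  have := hv z
  rw [hx, EReal.top_add_coe, top_le_iff] at this
  exact hz this

theorem IsSubdiff.inner_sub_nonneg_s9 {φ : E → EReal} (hbot : ∀ z, φ z ≠ ⊥) (htop : ∃ z, φ z ≠ ⊤)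
    {x v y w : E} (hv : IsSubdiff φ x v) (hw : IsSubdiff φ y w) :
    0 ≤ inner ℝ (x - y) (v - w) := by
  have hxy := hv y
  have hyx := hw x
  rw [← EReal.coe_toReal (hv.ne_top_s9 htop) (hbot x), ← EReal.coe_toReal (hw.ne_top_s9 htop) (hbot y),
    ← EReal.coe_add, EReal.coe_le_coe_iff] at hxy hyx
  have hvxy : inner ℝ v (x - y) = - inner ℝ v (y - x) := by
    rw [← inner_neg_right, neg_sub]
  rw [real_inner_comm, inner_sub_left, hvxy]
  linarith

theorem sqrt_le_norm_smul_add {c γ : ℝ} {X V : E} (hc : 0 ≤ c) (hcγ : c ≤ γ)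
    (hXV : 0 ≤ inner ℝ X V) : √(c ^ 2 * ‖X‖ ^ 2 + ‖V‖ ^ 2) ≤ ‖γ • X + V‖ := by
  rw [Real.sqrt_le_iff]
  refine ⟨norm_nonneg _, ?_⟩
  rw [norm_add_sq_real, norm_smul, real_inner_smul_left, Real.norm_eq_abs, mul_pow, sq_abs]
  have hγ : c ^ 2 ≤ γ ^ 2 := pow_le_pow_left₀ hc hcγ 2
  nlinarith [mul_le_mul_of_nonneg_right hγ (sq_nonneg ‖X‖), mul_nonneg (hc.trans hcγ) hXV]

theorem norm_deriv_smul_sub_add_sub_le {l η γ' c L C G : ℝ} {x y v w x' y' v' w' gx gy : E}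
    (hc : 0 < c) (hL : 0 ≤ L) (hx : l • x' + v' + v + gx = 0) (hy : η • y' + w' + w + gy = 0)
    (hg : ‖gx - gy‖ ≤ L * ‖x - y‖) (hC : ‖x' + y'‖ ≤ C)
    (hθ : √(c ^ 2 * ‖x - y‖ ^ 2 + ‖v - w‖ ^ 2) ≤ G) :
    ‖γ' • (x - y) + ((l + η) / 2) • (x' - y') + (v' - w')‖ ≤
      (|γ'| / c + (1 + L / c)) * G + C / 2 * |l - η| := by
  have hxy : c * ‖x - y‖ ≤ G := (le_abs_self _).trans <| (Real.abs_le_sqrt <| by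
    nlinarith [sq_nonneg ‖v - w‖]).trans hθ
  have hvw : ‖v - w‖ ≤ G := (le_abs_self _).trans <| (Real.abs_le_sqrt <| by
    nlinarith [sq_nonneg (c * ‖x - y‖)]).trans hθ
  -- subtracting the two equations eliminates everything but the mismatch `l - η`
  have hdiff : ((l + η) / 2) • (x' - y') + (v' - w') =
      -(v - w) - (gx - gy) + ((η - l) / 2) • (x' + y') := by
    linear_combination (norm := module) hx - hy
  have hscale : ∀ K : ℝ, 0 ≤ K → K * ‖x - y‖ ≤ K / c * G := fun K hK => by
    rw [div_mul_eq_mul_div, le_div_iff₀ hc, mul_assoc, mul_comm ‖x - y‖]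
    exact mul_le_mul_of_nonneg_left hxy hK
  rw [add_assoc, hdiff]
  calc _ ≤ |γ'| * ‖x - y‖ + ‖v - w‖ + ‖gx - gy‖ + |η - l| / 2 * ‖x' + y'‖ := by
        grw [norm_add_le, norm_add_le, norm_sub_le, norm_neg, norm_smul, norm_smul,
          Real.norm_eq_abs, Real.norm_eq_abs, abs_div, abs_two]
        linarith
    _ ≤ |γ'| / c * G + G + L / c * G + |l - η| / 2 * C := by
        have hmis : |η - l| / 2 * ‖x' + y'‖ ≤ |l - η| / 2 * C := by
          rw [abs_sub_comm]
          gcongr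
        linarith [hscale _ (abs_nonneg γ'), hg.trans (hscale L hL)]
    _ = _ := by ring

end InnerProduct

theorem stmt9_general (φ : H → EReal) (ψ : H → ℝ) (ψ' : H → H) (hst : Standing φ ψ ψ')
    (Lψ : ℝ) (hLψ : 0 ≤ Lψ)
    (hlip : ∀ a b : H, ‖ψ' a - ψ' b‖ ≤ Lψ * ‖a - b‖)
    (lam eta lam' eta' : ℝ → ℝ) (T c₀ : ℝ) (hT : 0 < T) (hc₀ : 0 < c₀)
    (hlam : ∀ t ∈ Set.Icc (0:ℝ) T, c₀ ≤ lam t)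
    (heta : ∀ t ∈ Set.Icc (0:ℝ) T, c₀ ≤ eta t)
    (hlamint : IntegrableOn lam' (Set.Icc 0 T))
    (hlamrep : ∀ t ∈ Set.Icc (0:ℝ) T, lam t = lam 0 + ∫ s in (0:ℝ)..t, lam' s)
    (hetaint : IntegrableOn eta' (Set.Icc 0 T))
    (hetarep : ∀ t ∈ Set.Icc (0:ℝ) T, eta t = eta 0 + ∫ s in (0:ℝ)..t, eta' s)
    (x v x' v' y w y' w' : ℝ → H) (x₀ v₀ y₀ w₀ : H)
    (hx0 : x 0 = x₀) (hv0 : v 0 = v₀) (hy0 : y 0 = y₀) (hw0 : w 0 = w₀)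
    (sol₁ : StrongSol φ ψ' lam T x v x' v')
    (sol₂ : StrongSol φ ψ' eta T y w y' w')
    (C : ℝ) (hC : ∀ᵐ t ∂(volume.restrict (Set.Ioo 0 T)), ‖x' t + y' t‖ ≤ C) :
    ∀ t ∈ Set.Icc (0:ℝ) T,
      Real.sqrt (c₀ ^ 2 * ‖x t - y t‖ ^ 2 + ‖v t - w t‖ ^ 2) ≤
        ((lam 0 + eta 0) / 2 * ‖x₀ - y₀‖ + ‖v₀ - w₀‖ +
          C / 2 * ∫ s in (0:ℝ)..T, |lam s - eta s|) *
        Real.exp ((∫ s in (0:ℝ)..T, |lam' s + eta' s|) / (2 * c₀) +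
          T * (1 + Lψ / c₀)) := by
  obtain ⟨⟨hbot, htop, -, -⟩, -, -, -⟩ := hst
  have hlamP : IsPrimitiveOn lam lam' T := ⟨hlamint, hlamrep⟩
  have hetaP : IsPrimitiveOn eta eta' T := ⟨hetaint, hetarep⟩
  have hu := (((hlamP.add hetaP).div_const 2).smul
    (IsPrimitiveOn.sub ⟨sol₁.xint, sol₁.xrep⟩ ⟨sol₂.xint, sol₂.xrep⟩)).add
    (IsPrimitiveOn.sub ⟨sol₁.vint, sol₁.vrep⟩ ⟨sol₂.vint, sol₂.vrep⟩)
  have hθ : ∀ s ∈ Icc 0 T, √(c₀ ^ 2 * ‖x s - y s‖ ^ 2 + ‖v s - w s‖ ^ 2) ≤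
      ‖((lam s + eta s) / 2) • (x s - y s) + (v s - w s)‖ := fun s hs =>
    sqrt_le_norm_smul_add hc₀.le (by linarith [hlam s hs, heta s hs])
      ((sol₁.subdiff s hs).inner_sub_nonneg_s9 hbot htop (sol₂.subdiff s hs))
  have hC₀ : 0 ≤ C := by
    have : (ae (volume.restrict (Ioo (0 : ℝ) T))).NeBot := ae_restrict_neBot.mpr (by simp [hT])
    obtain ⟨s, hs⟩ := hC.exists
    exact (norm_nonneg _).trans hs
  have hderiv : ∀ᵐ s ∂volume.restrict (Ioo 0 T),
      ‖((lam' s + eta' s) / 2) • (x s - y s) + ((lam s + eta s) / 2) • (x' s - y' s) +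
        (v' s - w' s)‖ ≤
      (|lam' s + eta' s| / (2 * c₀) + (1 + Lψ / c₀)) *
        ‖((lam s + eta s) / 2) • (x s - y s) + (v s - w s)‖ + C / 2 * |lam s - eta s| := by
    filter_upwards [sol₁.eqn, sol₂.eqn, hC, ae_restrict_mem measurableSet_Ioo] with s h₁ h₂ hCs hs
    rw [← abs_two, ← div_div, ← abs_div, abs_two]
    exact norm_deriv_smul_sub_add_sub_le hc₀ hLψ h₁ h₂ (hlip _ _) hCs
      (hθ s (Ioo_subset_Icc_self hs))
  have hI : IntervalIntegrable (fun s => |lam' s + eta' s|) volume 0 T :=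
    ((hlamP.add hetaP).intervalIntegrable ⟨hT.le, le_rfl⟩).abs
  intro t ht
  refine (hθ t ht).trans <| (hu.norm_le_mul_exp ?_ (fun s _ => by positivity) ?_
    (fun s _ => by positivity) hderiv ht).trans ?_
  · exact ((hlamint.add hetaint).abs.div_const _).add (integrableOn_const measure_Icc_lt_top.ne)
  · exact (continuousOn_const.mul (hlamP.continuousOn.sub hetaP.continuousOn).abs
      ).integrableOn_compact isCompact_Icc
  · have hγ₀ : 0 ≤ (lam 0 + eta 0) / 2 := by
      linarith [hlam 0 ⟨le_rfl, hT.le⟩, heta 0 ⟨le_rfl, hT.le⟩]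
    rw [intervalIntegral.integral_const_mul, intervalIntegral.integral_add (hI.div_const _)
      intervalIntegrable_const, intervalIntegral.integral_div, intervalIntegral.integral_const,
      sub_zero, smul_eq_mul]
    gcongr
    simp only [Pi.add_apply, Pi.sub_apply, hx0, hy0, hv0, hw0]
    grw [norm_add_le, norm_smul, Real.norm_of_nonneg hγ₀]

theorem stmt9 (φ : H → EReal) (ψ : H → ℝ) (ψ' : H → H) (hst : Standing φ ψ ψ')
    (Lψ : ℝ) (hLψ : 0 ≤ Lψ)
    (hlip : ∀ a b : H, ‖ψ' a - ψ' b‖ ≤ Lψ * ‖a - b‖)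
    (lam eta lam' eta' : ℝ → ℝ) (T c₀ : ℝ) (hT : 0 < T) (hc₀ : 0 < c₀)
    (hlam : ∀ t ∈ Set.Icc (0:ℝ) T, c₀ ≤ lam t)
    (heta : ∀ t ∈ Set.Icc (0:ℝ) T, c₀ ≤ eta t)
    (hlamint : IntegrableOn lam' (Set.Icc 0 T))
    (hlamrep : ∀ t ∈ Set.Icc (0:ℝ) T, lam t = lam 0 + ∫ s in (0:ℝ)..t, lam' s)
    (hetaint : IntegrableOn eta' (Set.Icc 0 T))
    (hetarep : ∀ t ∈ Set.Icc (0:ℝ) T, eta t = eta 0 + ∫ s in (0:ℝ)..t, eta' s)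
    (x v x' v' y w y' w' : ℝ → H) (x₀ v₀ y₀ w₀ : H)
    (hx0 : x 0 = x₀) (hv0 : v 0 = v₀) (hy0 : y 0 = y₀) (hw0 : w 0 = w₀)
    (hv₀ : IsSubdiff φ x₀ v₀) (hw₀ : IsSubdiff φ y₀ w₀)
    (sol₁ : StrongSol φ ψ' lam T x v x' v')
    (sol₂ : StrongSol φ ψ' eta T y w y' w')
    (C : ℝ) (hC : ∀ᵐ t ∂(volume.restrict (Set.Ioo 0 T)), ‖x' t + y' t‖ ≤ C) :
    ∀ t ∈ Set.Icc (0:ℝ) T,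
      Real.sqrt (c₀ ^ 2 * ‖x t - y t‖ ^ 2 + ‖v t - w t‖ ^ 2) ≤
        ((lam 0 + eta 0) / 2 * ‖x₀ - y₀‖ + ‖v₀ - w₀‖ +
          C / 2 * ∫ s in (0:ℝ)..T, |lam s - eta s|) *
        Real.exp ((∫ s in (0:ℝ)..T, |lam' s + eta' s|) / (2 * c₀) +
          T * (1 + Lψ / c₀)) :=
  stmt9_general φ ψ ψ' hst Lψ hLψ hlip lam eta lam' eta' T c₀ hT hc₀ hlam heta hlamint hlamrep
    hetaint hetarep x v x' v' y w y' w' x₀ v₀ y₀ w₀ hx0 hv0 hy0 hw0 sol₁ sol₂ C hC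
end
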